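/- (Proposition: an isophote with timelike axis cannot be a line of curvature) Assume k_n(s)² > k_g(s)² for all s ∈ I (α has timelike principal normal with nonvanishing curvature) and τ_g(s) = 0 for all s ∈ I (α is a line of curvature). Then there exist no θ > 0 and constant vector d ∈ ℝ³ with ⟨d,d⟩ = −1 and ⟨N(s),d⟩ = −cosh θ for all s ∈ I. -/

import Mathlib

/-- The Lorentzian (Minkowski) inner product on `E₁³ = ℝ³`:
`⟨x,y⟩ = -x₁y₁ + x₂y₂ + x₃y₃`. -/
noncomputable def mdot (x y : Fin 3 → ℝ) : ℝ :=
  -(x 0 * y 0) + x 1 * y 1 + x 2 * y 2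

lemma mdot_hasDerivAt {F : ℝ → Fin 3 → ℝ} {V : Fin 3 → ℝ} (d : Fin 3 → ℝ) {s : ℝ}
    (h : HasDerivAt F V s) : HasDerivAt (fun t => mdot (F t) d) (mdot V d) s := by
  have h0 := hasDerivAt_pi.1 h 0
  have h1 := hasDerivAt_pi.1 h 1
  have h2 := hasDerivAt_pi.1 h 2
  simpa [mdot, Pi.add_def, Pi.neg_def] using
    ((h0.mul_const (d 0)).neg.add (h1.mul_const (d 1))).add (h2.mul_const (d 2))

lemma const_deriv {f : ℝ → ℝ} {c a b s f' : ℝ}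
    (hs : s ∈ Set.Ioo a b) (hc : ∀ t ∈ Set.Ioo a b, f t = c)
    (h : HasDerivAt f f' s) : f' = 0 := by
  have hev : f =ᶠ[nhds s] fun _ => c :=
    Filter.eventuallyEq_of_mem (isOpen_Ioo.mem_nhds hs) hc
  have h0 : HasDerivAt f 0 s := (hasDerivAt_const s c).congr_of_eventuallyEq hev
  exact h.unique h0

/-- a vector Lorentz-orthogonal to a unit timelike vector is spacelike or zero -/
lemma spacelike_of_perp {x n : Fin 3 → ℝ} (hn : mdot n n = -1) (hxn : mdot x n = 0) :
    0 ≤ mdot x x := by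
  simp only [mdot] at *
  have key : (x 1 ^ 2 + x 2 ^ 2 - x 0 ^ 2) * (n 0 * n 0)
      = (x 1 ^ 2 + x 2 ^ 2) + (x 1 * n 2 - x 2 * n 1) ^ 2 := by
    linear_combination (-(x 1 ^ 2 + x 2 ^ 2)) * hn
      + (x 0 * n 0 + x 1 * n 1 + x 2 * n 2) * hxn
  have hn0 : 1 ≤ n 0 * n 0 := by nlinarith [sq_nonneg (n 1), sq_nonneg (n 2)]
  nlinarith [key, hn0, sq_nonneg (x 1 * n 2 - x 2 * n 1), sq_nonneg (x 1),
    sq_nonneg (x 2), sq_nonneg (x 0)]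

/-- An isophote curve with timelike axis cannot be a line of curvature: if
`k_n² > k_g²` on `I` (timelike principal normal with nonvanishing curvature) and
`τ_g ≡ 0` on `I` (line of curvature), then there is no `θ > 0` and constant vector
`d` with `⟨d,d⟩ = −1` and `⟨N,d⟩ = −cosh θ` along the curve. -/
theorem statement10
    -- the open interval `I`
    (a b : ℝ) (hab : a < b) (I : Set ℝ) (hI : I = Set.Ioo a b)
    -- the Darboux frame `T, B, N` of a unit-speed spacelike curve on a spacelike
    -- surface, with normal curvature `kn`, geodesic curvature `kg` and geodesic
    -- torsion `τg`
    (T B N : ℝ → Fin 3 → ℝ) (kn kg τg : ℝ → ℝ)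
    (hTs : ContDiffOn ℝ (⊤ : ℕ∞) T I) (hBs : ContDiffOn ℝ (⊤ : ℕ∞) B I) (hNs : ContDiffOn ℝ (⊤ : ℕ∞) N I)
    (hkns : ContDiffOn ℝ (⊤ : ℕ∞) kn I) (hkgs : ContDiffOn ℝ (⊤ : ℕ∞) kg I)
    (hτgs : ContDiffOn ℝ (⊤ : ℕ∞) τg I)
    (hTT : ∀ s ∈ I, mdot (T s) (T s) = 1)
    (hBB : ∀ s ∈ I, mdot (B s) (B s) = 1)
    (hNN : ∀ s ∈ I, mdot (N s) (N s) = -1)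
    (hTB : ∀ s ∈ I, mdot (T s) (B s) = 0)
    (hTN : ∀ s ∈ I, mdot (T s) (N s) = 0)
    (hBN : ∀ s ∈ I, mdot (B s) (N s) = 0)
    -- the Darboux frame equations
    (hT' : ∀ s ∈ I, HasDerivAt T (kg s • B s + kn s • N s) s)
    (hB' : ∀ s ∈ I, HasDerivAt B ((-kg s) • T s + τg s • N s) s)
    (hN' : ∀ s ∈ I, HasDerivAt N (kn s • T s + τg s • B s) s)
    (hkk : ∀ s ∈ I, kg s ^ 2 < kn s ^ 2)
    (hloc : ∀ s ∈ I, τg s = 0) :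
    ¬ ∃ θ : ℝ, 0 < θ ∧ ∃ d : Fin 3 → ℝ, mdot d d = -1 ∧
        ∀ s ∈ I, mdot (N s) d = -Real.cosh θ := by
  rintro ⟨θ, hθ, d, hdd, hNd⟩
  subst hI
  set c := Real.cosh θ with hcdef
  have hc1 : 1 < c := by
    have := Real.one_lt_cosh.mpr (ne_of_gt hθ) -- may need name fix
    exact this
  -- kn is nonvanishing
  have hknne : ∀ s ∈ Set.Ioo a b, kn s ≠ 0 := by
    intro s hs h0
    have := hkk s hs
    rw [h0] at this
    nlinarith [sq_nonneg (kg s)]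
  -- expansion of mdot of a linear combination
  have hlin : ∀ (p q : ℝ) (u v : Fin 3 → ℝ),
      mdot (p • u + q • v) d = p * mdot u d + q * mdot v d := by
    intro p q u v
    simp [mdot]
    ring
  -- ⟨T s, d⟩ = 0 on I
  have hTd : ∀ s ∈ Set.Ioo a b, mdot (T s) d = 0 := by
    intro s hs
    have hder := mdot_hasDerivAt d (hN' s hs)
    have h0 := const_deriv hs hNd hder
    rw [hlin, hloc s hs] at h0
    have h0' : kn s * mdot (T s) d = 0 := by linarith
    exact (mul_eq_zero.1 h0').resolve_left (hknne s hs)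
  -- kg·⟨B,d⟩ = kn·c on I
  have hBd : ∀ s ∈ Set.Ioo a b, kg s * mdot (B s) d = kn s * c := by
    intro s hs
    have hder := mdot_hasDerivAt d (hT' s hs)
    have h0 := const_deriv hs hTd hder
    rw [hlin] at h0
    rw [hNd s hs] at h0
    linarith
  -- work at the midpoint
  set s₀ := (a + b) / 2 with hs₀def
  have hs₀ : s₀ ∈ Set.Ioo a b := ⟨by linarith, by linarith⟩
  set v := mdot (B s₀) d with hvdef
  -- the orthogonal remainder is spacelike
  set x : Fin 3 → ℝ := fun i => d i - v * B s₀ i - c * N s₀ i with hxdef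
  have hxn : mdot x (N s₀) = 0 := by
    have h1 := hNd s₀ hs₀
    have h2 := hNN s₀ hs₀
    have h3 := hBN s₀ hs₀
    simp only [mdot, hxdef] at h1 h2 h3 ⊢
    linear_combination h1 - v * h3 - c * h2
  have hxx : mdot x x = c ^ 2 - v ^ 2 - 1 := by
    have h1 := hNd s₀ hs₀
    have h2 := hNN s₀ hs₀
    have h3 := hBN s₀ hs₀
    have h4 := hBB s₀ hs₀
    have h5 : mdot (B s₀) d = v := rfl
    have h6 := hdd
    simp only [mdot, hxdef] at h1 h2 h3 h4 h5 h6 ⊢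
    linear_combination h6 - 2 * v * h5 - 2 * c * h1 + v ^ 2 * h4
      + 2 * v * c * h3 + c ^ 2 * h2
  have hsp := spacelike_of_perp (hNN s₀ hs₀) hxn
  rw [hxx] at hsp
  -- final contradiction
  have heq := hBd s₀ hs₀
  have hk := hkk s₀ hs₀
  rw [← hvdef] at heq
  have h2 : (kg s₀) ^ 2 * v ^ 2 = (kn s₀) ^ 2 * c ^ 2 := by
    linear_combination (kg s₀ * v + kn s₀ * c) * heq
  nlinarith [sq_nonneg (kg s₀), sq_nonneg (kn s₀), h2, hsp, hk,
    mul_nonneg (sq_nonneg (kg s₀)) hsp,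
    mul_pos (sub_pos.2 hk) (by nlinarith : (0:ℝ) < c ^ 2 - 1)]
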